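/- Suppose a linear impulsive transition operator satisfies the exponential estimate ‖Z(t,s)‖ ≤ N e^{−ω(t−s)} for t ≥ s with N, ω > 0, and NL(2/ω + e^ω/(1−e^{−ω})) < 1; then the map on bounded functions defined by Tz(t) = ∫_{−∞}^t Z(t,s) f(z(s)) ds + Σ_{ζ_i < t} Z(t,ζ_i) W(z(ζ_i)), where f, W are L-Lipschitz and bounded by M₀, and the impulse moments satisfy i ≤ ζ_i < i+1, is a contraction on the space of bounded functions with sup-norm, with contraction constant NL(1/ω + e^ω/(1−e^{−ω})). -/

import Mathlib

/-!
The difference `T z₁ t - T z₂ t` is an integral plus an impulse series of differences. By the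
Lipschitz bound and the exponential estimate, the integrand is at most `N L C e^{-ω(t-s)}`, which
integrates over `(-∞, t]` to `N L C / ω`. Since `ζ i < i + 1`, the `i`-th impulse term is at most
`N L C e^ω e^{-ω(t-i)}`, and over the integers `i < t` this is a geometric series in `e^{-ω}`
with sum at most `N L C e^ω / (1 - e^{-ω})`.
-/

open MeasureTheory Real Set

lemma exp_neg_mul_sub (ω t s : ℝ) : exp (-ω * (t - s)) = exp (-ω * t) * exp (ω * s) := by
  rw [← exp_add]
  ring_nf

lemma integrableOn_exp_neg_mul_sub_Iic {ω : ℝ} (hω : 0 < ω) (t : ℝ) :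
    IntegrableOn (fun s => exp (-ω * (t - s))) (Iic t) := by
  simp_rw [exp_neg_mul_sub ω t]
  exact (integrableOn_exp_mul_Iic hω t).const_mul _

lemma integral_exp_neg_mul_sub_Iic {ω : ℝ} (hω : 0 < ω) (t : ℝ) :
    ∫ s in Iic t, exp (-ω * (t - s)) = 1 / ω := by
  simp_rw [exp_neg_mul_sub ω t, integral_const_mul, integral_exp_mul_Iic hω, mul_div_assoc',
    ← exp_add]
  simp

/-- `⌈t⌉ - 1` is the largest integer below `t`; the terms of the series, read downwards from it,
form a geometric progression with ratio `exp (-ω)`. -/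
lemma hasSum_exp_neg_mul_sub_int {ω : ℝ} (hω : 0 < ω) (t : ℝ) :
    HasSum (fun i : ℤ => if (i : ℝ) < t then exp (-ω * (t - i)) else 0)
      (exp (-ω * (t - (⌈t⌉ - 1))) / (1 - exp (-ω))) := by
  set m : ℤ := ⌈t⌉ - 1
  have hm : (m : ℝ) < t := by push_cast [m]; linarith [Int.ceil_lt_add_one t]
  have hinj : Function.Injective fun k : ℕ => m - k := fun a b h => by simpa using h
  have hsupp : ∀ i ∉ range fun k : ℕ => m - k,
      (if (i : ℝ) < t then exp (-ω * (t - i)) else 0) = 0 := by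
    intro i hi
    refine if_neg fun hit => hi ⟨(m - i).toNat, ?_⟩
    have := Int.lt_ceil.2 hit
    simp only
    omega
  have hterm : ∀ k : ℕ, (if ((m - k : ℤ) : ℝ) < t then exp (-ω * (t - (m - k : ℤ))) else 0) =
      exp (-ω * (t - m)) * exp (-ω) ^ k := fun k => by
    have hk : ((m - k : ℤ) : ℝ) < t := by push_cast; linarith [k.cast_nonneg (α := ℝ)]
    rw [if_pos hk, ← exp_nat_mul, ← exp_add]
    push_cast
    ring_nf
  have hval : exp (-ω * (t - (⌈t⌉ - 1))) / (1 - exp (-ω)) =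
      exp (-ω * (t - m)) * (1 - exp (-ω))⁻¹ := by
    push_cast [m]
    rw [div_eq_mul_inv]
  rw [← hinj.hasSum_iff hsupp, Function.comp_def, funext hterm, hval]
  exact (hasSum_geometric_of_lt_one (exp_pos (-ω)).le
    (exp_lt_one_iff.2 (neg_lt_zero.2 hω))).mul_left _

lemma tsum_exp_neg_mul_sub_int_le {ω : ℝ} (hω : 0 < ω) (t : ℝ) :
    ∑' i : ℤ, (if (i : ℝ) < t then exp (-ω * (t - i)) else 0) ≤ 1 / (1 - exp (-ω)) := by
  rw [(hasSum_exp_neg_mul_sub_int hω t).tsum_eq]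
  have hr : 0 < 1 - exp (-ω) := sub_pos.2 (exp_lt_one_iff.2 (neg_lt_zero.2 hω))
  gcongr
  rw [exp_le_one_iff]
  nlinarith [Int.ceil_lt_add_one t]

lemma exp_neg_mul_sub_le_exp_mul {ω : ℝ} (hω : 0 ≤ ω) {t s : ℝ} {i : ℤ} (hs : s < i + 1) :
    exp (-ω * (t - s)) ≤ exp ω * exp (-ω * (t - i)) := by
  rw [← exp_add, exp_le_exp]
  nlinarith

lemma ContinuousLinearMap.norm_apply_comp_sub_le {E F X : Type*}
    [SeminormedAddCommGroup E] [NormedSpace ℝ E] [SeminormedAddCommGroup F] [NormedSpace ℝ F]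
    [SeminormedAddCommGroup X] {A : E →L[ℝ] F} {f : X → E} {K : NNReal} {b C : ℝ} {x y : X}
    (hf : LipschitzWith K f) (hA : ‖A‖ ≤ b) (hxy : ‖x - y‖ ≤ C) :
    ‖A (f x) - A (f y)‖ ≤ b * (K * C) := by
  have hb : 0 ≤ b := (norm_nonneg A).trans hA
  rw [← map_sub]
  calc ‖A (f x - f y)‖ ≤ ‖A‖ * ‖f x - f y‖ := A.le_opNorm _
    _ ≤ b * (K * C) := by gcongr; exact (hf.norm_sub_le x y).trans (by gcongr)

section DifferenceBounds

variable {E F X : Type*}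
    [NormedAddCommGroup E] [NormedSpace ℝ E] [NormedAddCommGroup F] [NormedSpace ℝ F]
    [SeminormedAddCommGroup X] {N ω C : ℝ} {K : NNReal}
    {Z : ℝ → ℝ → E →L[ℝ] F} {f : X → E} {z₁ z₂ : ℝ → X}

lemma norm_integral_sub_le (hω : 0 < ω)
    (hZ : ∀ t s : ℝ, s ≤ t → ‖Z t s‖ ≤ N * exp (-ω * (t - s))) (hf : LipschitzWith K f)
    (hdiff : ∀ t, ‖z₁ t - z₂ t‖ ≤ C) (t : ℝ)
    (hint₁ : IntegrableOn (fun s => Z t s (f (z₁ s))) (Iic t))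
    (hint₂ : IntegrableOn (fun s => Z t s (f (z₂ s))) (Iic t)) :
    ‖(∫ s in Iic t, Z t s (f (z₁ s))) - ∫ s in Iic t, Z t s (f (z₂ s))‖ ≤ N * K * C / ω := by
  have hbound : ∀ s ∈ Iic t,
      ‖Z t s (f (z₁ s)) - Z t s (f (z₂ s))‖ ≤ N * K * C * exp (-ω * (t - s)) := fun s hs => by
    have := (Z t s).norm_apply_comp_sub_le hf (hZ t s hs) (hdiff s)
    linarith
  calc ‖(∫ s in Iic t, Z t s (f (z₁ s))) - ∫ s in Iic t, Z t s (f (z₂ s))‖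
      = ‖∫ s in Iic t, (Z t s (f (z₁ s)) - Z t s (f (z₂ s)))‖ := by rw [integral_sub hint₁ hint₂]
    _ ≤ ∫ s in Iic t, N * K * C * exp (-ω * (t - s)) :=
        norm_integral_le_of_norm_le ((integrableOn_exp_neg_mul_sub_Iic hω t).const_mul _)
          ((ae_restrict_mem measurableSet_Iic).mono hbound)
    _ = N * K * C / ω := by rw [integral_const_mul, integral_exp_neg_mul_sub_Iic hω, mul_one_div]

lemma norm_tsum_sub_le (hω : 0 < ω)
    (hZ : ∀ t s : ℝ, s ≤ t → ‖Z t s‖ ≤ N * exp (-ω * (t - s))) (hf : LipschitzWith K f)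
    (hdiff : ∀ t, ‖z₁ t - z₂ t‖ ≤ C) {ζ : ℤ → ℝ} (hζ : ∀ i : ℤ, (i : ℝ) ≤ ζ i ∧ ζ i < i + 1)
    (t : ℝ) (hsum₁ : Summable fun i : ℤ => if ζ i < t then Z t (ζ i) (f (z₁ (ζ i))) else 0)
    (hsum₂ : Summable fun i : ℤ => if ζ i < t then Z t (ζ i) (f (z₂ (ζ i))) else 0) :
    ‖(∑' i : ℤ, if ζ i < t then Z t (ζ i) (f (z₁ (ζ i))) else 0) -
        ∑' i : ℤ, if ζ i < t then Z t (ζ i) (f (z₂ (ζ i))) else 0‖ ≤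
      N * K * C * exp ω / (1 - exp (-ω)) := by
  have hN : 0 ≤ N := by simpa using (norm_nonneg _).trans (hZ t t le_rfl)
  have hC : 0 ≤ C := (norm_nonneg _).trans (hdiff t)
  set D := N * K * C * exp ω
  have hD : 0 ≤ D := by positivity
  have hbound : ∀ i : ℤ,
      ‖(if ζ i < t then Z t (ζ i) (f (z₁ (ζ i))) else 0) -
          (if ζ i < t then Z t (ζ i) (f (z₂ (ζ i))) else 0)‖ ≤
        D * (if (i : ℝ) < t then exp (-ω * (t - i)) else 0) := by
    intro i
    by_cases hit : ζ i < t
    · rw [if_pos hit, if_pos hit, if_pos ((hζ i).1.trans_lt hit)]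
      have hZi : ‖Z t (ζ i)‖ ≤ N * (exp ω * exp (-ω * (t - i))) :=
        (hZ t (ζ i) hit.le).trans (by gcongr; exact exp_neg_mul_sub_le_exp_mul hω.le (hζ i).2)
      have := (Z t (ζ i)).norm_apply_comp_sub_le hf hZi (hdiff (ζ i))
      linarith
    · rw [if_neg hit, if_neg hit, sub_self, norm_zero]
      split_ifs <;> positivity
  calc _ = ‖∑' i : ℤ, ((if ζ i < t then Z t (ζ i) (f (z₁ (ζ i))) else 0) -
          (if ζ i < t then Z t (ζ i) (f (z₂ (ζ i))) else 0))‖ := by rw [hsum₁.tsum_sub hsum₂]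
    _ ≤ D * ∑' i : ℤ, (if (i : ℝ) < t then exp (-ω * (t - i)) else 0) :=
        tsum_of_norm_bounded ((hasSum_exp_neg_mul_sub_int hω t).summable.hasSum.mul_left D) hbound
    _ ≤ D * (1 / (1 - exp (-ω))) := by gcongr; exact tsum_exp_neg_mul_sub_int_le hω t
    _ = N * K * C * exp ω / (1 - exp (-ω)) := mul_one_div _ _

end DifferenceBounds

theorem contraction_on_bounded_functions_general
    {E : Type*} [NormedAddCommGroup E] [NormedSpace ℝ E]
    (N ω L : ℝ) (hω : 0 < ω) (hL : 0 < L)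
    (Z : ℝ → ℝ → (E →L[ℝ] E))
    (hZ : ∀ t s : ℝ, s ≤ t → ‖Z t s‖ ≤ N * exp (-ω * (t - s)))
    (f W : E → E)
    (hf : LipschitzWith (Real.toNNReal L) f) (hW : LipschitzWith (Real.toNNReal L) W)
    (ζ : ℤ → ℝ) (hζ : ∀ i : ℤ, (i : ℝ) ≤ ζ i ∧ ζ i < i + 1)
    (T : (ℝ → E) → ℝ → E)
    (hT : ∀ z : ℝ → E, ∀ t : ℝ,
      T z t = (∫ s in Set.Iic t, (Z t s) (f (z s))) +
        ∑' i : ℤ, if ζ i < t then (Z t (ζ i)) (W (z (ζ i))) else 0)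
    (z₁ z₂ : ℝ → E)
    (hint₁ : ∀ t : ℝ, IntegrableOn (fun s => (Z t s) (f (z₁ s))) (Set.Iic t))
    (hint₂ : ∀ t : ℝ, IntegrableOn (fun s => (Z t s) (f (z₂ s))) (Set.Iic t))
    (hsum₁ : ∀ t : ℝ, Summable fun i : ℤ => if ζ i < t then (Z t (ζ i)) (W (z₁ (ζ i))) else 0)
    (hsum₂ : ∀ t : ℝ, Summable fun i : ℤ => if ζ i < t then (Z t (ζ i)) (W (z₂ (ζ i))) else 0)
    (C : ℝ) (hdiff : ∀ t : ℝ, ‖z₁ t - z₂ t‖ ≤ C) :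
    ∀ t : ℝ, ‖T z₁ t - T z₂ t‖ ≤ N * L * (1 / ω + exp ω / (1 - exp (-ω))) * C := by
  intro t
  have hI := norm_integral_sub_le hω hZ hf hdiff t (hint₁ t) (hint₂ t)
  have hS := norm_tsum_sub_le hω hZ hW hdiff hζ t (hsum₁ t) (hsum₂ t)
  rw [Real.coe_toNNReal L hL.le] at hI hS
  rw [hT z₁ t, hT z₂ t, add_sub_add_comm]
  calc _ ≤ _ := norm_add_le _ _
    _ ≤ N * L * C / ω + N * L * C * exp ω / (1 - exp (-ω)) := add_le_add hI hS
    _ = N * L * (1 / ω + exp ω / (1 - exp (-ω))) * C := by ring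

/-- The integral operator of the quasilinear impulsive system is a contraction on
bounded functions, with contraction constant `N*L*(1/ω + e^ω/(1 - e^{-ω}))`. -/
theorem contraction_on_bounded_functions
    {E : Type*} [NormedAddCommGroup E] [NormedSpace ℝ E] [CompleteSpace E]
    [MeasurableSpace E] [BorelSpace E]
    (N ω L M₀ : ℝ) (hN : 0 < N) (hω : 0 < ω) (hL : 0 < L) (hM₀ : 0 < M₀)
    (Z : ℝ → ℝ → (E →L[ℝ] E))
    (hZ : ∀ t s : ℝ, s ≤ t → ‖Z t s‖ ≤ N * exp (-ω * (t - s)))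
    (hsmall : N * L * (2 / ω + exp ω / (1 - exp (-ω))) < 1)
    (f W : E → E)
    (hf : LipschitzWith (Real.toNNReal L) f) (hW : LipschitzWith (Real.toNNReal L) W)
    (hfb : ∀ x, ‖f x‖ ≤ M₀) (hWb : ∀ x, ‖W x‖ ≤ M₀)
    (ζ : ℤ → ℝ) (hζ : ∀ i : ℤ, (i : ℝ) ≤ ζ i ∧ ζ i < i + 1)
    (T : (ℝ → E) → ℝ → E)
    (hT : ∀ z : ℝ → E, ∀ t : ℝ,
      T z t = (∫ s in Set.Iic t, (Z t s) (f (z s))) +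
        ∑' i : ℤ, if ζ i < t then (Z t (ζ i)) (W (z (ζ i))) else 0)
    (z₁ z₂ : ℝ → E) (hm₁ : Measurable z₁) (hm₂ : Measurable z₂)
    (hint₁ : ∀ t : ℝ, IntegrableOn (fun s => (Z t s) (f (z₁ s))) (Set.Iic t))
    (hint₂ : ∀ t : ℝ, IntegrableOn (fun s => (Z t s) (f (z₂ s))) (Set.Iic t))
    (hsum₁ : ∀ t : ℝ, Summable fun i : ℤ => if ζ i < t then (Z t (ζ i)) (W (z₁ (ζ i))) else 0)
    (hsum₂ : ∀ t : ℝ, Summable fun i : ℤ => if ζ i < t then (Z t (ζ i)) (W (z₂ (ζ i))) else 0)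
    (C : ℝ) (hC : 0 ≤ C) (hdiff : ∀ t : ℝ, ‖z₁ t - z₂ t‖ ≤ C) :
    ∀ t : ℝ, ‖T z₁ t - T z₂ t‖ ≤ N * L * (1 / ω + exp ω / (1 - exp (-ω))) * C :=
  contraction_on_bounded_functions_general N ω L hω hL Z hZ f W hf hW ζ hζ T hT z₁ z₂ hint₁ hint₂
    hsum₁ hsum₂ C hdiff
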